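/- arXiv:2101.01398 — 6 statements merged into one kernel-verified Lean document; each statement's English description precedes it below -/
import Mathlib

section
/- Let μ : [0,∞) → ℝ be continuously differentiable with μ'(t) ≤ 0 for all t ≥ 0, and suppose there are constants 0 < m ≤ M such that m(t−s) ≤ μ(t²)t − μ(s²)s ≤ M(t−s) for all t ≥ s ≥ 0. Define ξ(t) := μ(t²)t. Then for all matrices κ, τ ∈ ℝ^{d×d}, (μ(|κ|²)κ − μ(|τ|²)τ) : (κ − τ) ≥ c(κ,τ)|κ − τ|², where c(κ,τ) := inf_{t ∈ (0,1)} ξ'(|κ| + t(|τ|−|κ|)); in particular the left-hand side is at least m|κ−τ|². -/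
open scoped BigOperators

def frobIP {d : ℕ} (A B : Matrix (Fin d) (Fin d) ℝ) : ℝ :=
  ∑ i, ∑ j, A i j * B i j

noncomputable def frobNorm {d : ℕ} (A : Matrix (Fin d) (Fin d) ℝ) : ℝ :=
  Real.sqrt (frobIP A A)

lemma frobIP_self_nonneg {d : ℕ} (A : Matrix (Fin d) (Fin d) ℝ) : 0 ≤ frobIP A A := by
  apply Finset.sum_nonneg; intro i _; apply Finset.sum_nonneg; intro j _; exact mul_self_nonneg _

lemma frobNorm_sq {d : ℕ} (A : Matrix (Fin d) (Fin d) ℝ) : frobNorm A ^ 2 = frobIP A A := by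
  rw [frobNorm, Real.sq_sqrt (frobIP_self_nonneg A)]

lemma frobIP_expand {d : ℕ} (x y : ℝ) (A B : Matrix (Fin d) (Fin d) ℝ) :
    frobIP (x • A - y • B) (A - B)
      = x * frobIP A A - (x + y) * frobIP A B + y * frobIP B B := by
  simp only [frobIP, Matrix.sub_apply, Matrix.smul_apply, smul_eq_mul, Finset.mul_sum]
  rw [← Finset.sum_sub_distrib, ← Finset.sum_add_distrib]
  apply Finset.sum_congr rfl; intro i _
  rw [← Finset.sum_sub_distrib, ← Finset.sum_add_distrib]
  apply Finset.sum_congr rfl; intro j _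
  ring

lemma frobIP_sub_sub {d : ℕ} (A B : Matrix (Fin d) (Fin d) ℝ) :
    frobIP (A - B) (A - B) = frobIP A A - 2 * frobIP A B + frobIP B B := by
  have := frobIP_expand (d := d) 1 1 A B
  simp only [one_smul] at this
  rw [this]; ring

lemma frobIP_cauchy {d : ℕ} (A B : Matrix (Fin d) (Fin d) ℝ) :
    frobIP A B ≤ frobNorm A * frobNorm B := by
  have h2 : frobIP A B ^ 2 ≤ frobIP A A * frobIP B B := by
    simp only [frobIP]
    have h := Finset.sum_mul_sq_le_sq_mul_sq Finset.univ
       (fun p : Fin d × Fin d => A p.1 p.2) (fun p : Fin d × Fin d => B p.1 p.2)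
    simpa [pow_two, Fintype.sum_prod_type] using h
  calc frobIP A B ≤ |frobIP A B| := le_abs_self _
    _ = Real.sqrt (frobIP A B ^ 2) := (Real.sqrt_sq_eq_abs _).symm
    _ ≤ Real.sqrt (frobIP A A * frobIP B B) := Real.sqrt_le_sqrt h2
    _ = frobNorm A * frobNorm B := by
        rw [frobNorm, frobNorm, ← Real.sqrt_mul (frobIP_self_nonneg A)]

section
variable (μ : ℝ → ℝ) (m M : ℝ) (ξ : ℝ → ℝ)

lemma xi_hasDeriv (hC1 : ContDiff ℝ 1 μ) (hξ : ξ = fun t : ℝ => μ (t ^ 2) * t) (t : ℝ) :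
    HasDerivAt ξ (deriv μ (t ^ 2) * (2 * t) * t + μ (t ^ 2)) t := by
  have h1 : HasDerivAt (fun t : ℝ => t ^ 2) (2 * t) t := by
    simpa using hasDerivAt_pow 2 t
  have h2 : HasDerivAt μ (deriv μ (t ^ 2)) ((fun s : ℝ => s ^ 2) t) :=
    (hC1.differentiable one_ne_zero _).hasDerivAt
  have h3 : HasDerivAt (μ ∘ fun t : ℝ => t ^ 2) (deriv μ (t ^ 2) * (2 * t)) t :=
    HasDerivAt.comp (h := fun s : ℝ => s ^ 2) (h₂ := μ) t h2 h1
  have h4 := h3.mul (hasDerivAt_id t)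
  rw [hξ]
  exact h4.congr_deriv (by simp only [Function.comp_apply, id_eq]; ring)

lemma xi_deriv_eq (hC1 : ContDiff ℝ 1 μ) (hξ : ξ = fun t : ℝ => μ (t ^ 2) * t) :
    deriv ξ = fun t => deriv μ (t ^ 2) * (2 * t) * t + μ (t ^ 2) := by
  funext t
  exact (xi_hasDeriv μ ξ hC1 hξ t).deriv

lemma xi_deriv_continuous (hC1 : ContDiff ℝ 1 μ) (hξ : ξ = fun t : ℝ => μ (t ^ 2) * t) :
    Continuous (deriv ξ) := by
  rw [xi_deriv_eq μ ξ hC1 hξ]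
  have hdc : Continuous (deriv μ) := hC1.continuous_deriv le_rfl
  exact (((hdc.comp (continuous_pow 2)).mul (continuous_const.mul continuous_id)).mul
    continuous_id).add (hC1.continuous.comp (continuous_pow 2))

lemma xi_deriv_ge (hC1 : ContDiff ℝ 1 μ) (hξ : ξ = fun t : ℝ => μ (t ^ 2) * t)
    (hbd : ∀ t s : ℝ, 0 ≤ s → s ≤ t →
      m * (t - s) ≤ μ (t ^ 2) * t - μ (s ^ 2) * s ∧
      μ (t ^ 2) * t - μ (s ^ 2) * s ≤ M * (t - s))
    (t : ℝ) (ht : 0 ≤ t) : m ≤ deriv ξ t := by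
  have hd : HasDerivAt ξ (deriv ξ t) t :=
    ((xi_hasDeriv μ ξ hC1 hξ t).differentiableAt).hasDerivAt
  have hs : Filter.Tendsto (slope ξ t) (nhdsWithin t (Set.Ioi t)) (nhds (deriv ξ t)) :=
    (hasDerivAt_iff_tendsto_slope.mp hd).mono_left
      (nhdsWithin_mono t (fun x hx => ne_of_gt hx))
  refine ge_of_tendsto hs ?_
  filter_upwards [self_mem_nhdsWithin] with u hu
  have hu' : t < u := hu
  have hb := (hbd u t ht hu'.le).1
  rw [slope_def_field, div_eq_inv_mul]
  rw [le_inv_mul_iff₀ (by linarith : (0:ℝ) < u - t)]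
  calc (u - t) * m = m * (u - t) := by ring
    _ ≤ ξ u - ξ t := by rw [hξ]; exact hb

end

lemma key_ineq (μa μb c D a b P : ℝ) (hP : P ≤ a * b)
    (h2 : 2 * c ≤ μa + μb ∨ P = a * b)
    (h3 : μa * a - μb * b = D * (a - b)) (h4 : c ≤ D) :
    c * (a ^ 2 - 2 * P + b ^ 2) ≤ μa * a ^ 2 - (μa + μb) * P + μb * b ^ 2 := by
  have h3' : (μa * a - μb * b) * (a - b) = D * (a - b) ^ 2 := by rw [h3]; ring
  have p2 : 0 ≤ (D - c) * (a - b) ^ 2 :=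
    mul_nonneg (by linarith) (sq_nonneg _)
  rcases h2 with h2 | h2
  · have p1 : 0 ≤ (μa + μb - 2 * c) * (a * b - P) :=
      mul_nonneg (by linarith) (by linarith)
    nlinarith [p1, p2, h3']
  · subst h2
    nlinarith [p2, h3']

lemma frobNorm_pos {d : ℕ} (A : Matrix (Fin d) (Fin d) ℝ) (hA : A ≠ 0) : 0 < frobNorm A := by
  have h1 : frobIP A A ≠ 0 := by
    intro h0
    apply hA
    ext i j
    have h2 := (Finset.sum_eq_zero_iff_of_nonneg (fun i _ =>
      Finset.sum_nonneg (fun j _ => mul_self_nonneg (A i j)))).mp h0 i (Finset.mem_univ i)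
    have h3 := (Finset.sum_eq_zero_iff_of_nonneg (fun j _ =>
      mul_self_nonneg (A i j))).mp h2 j (Finset.mem_univ j)
    simpa [mul_self_eq_zero] using h3
  exact Real.sqrt_pos.mpr (lt_of_le_of_ne (frobIP_self_nonneg A) (Ne.symm h1))


set_option maxHeartbeats 1000000 in
theorem strong_monotonicity_pointwise {d : ℕ} (μ : ℝ → ℝ) (m M : ℝ)
    (hm : 0 < m) (hmM : m ≤ M)
    (hC1 : ContDiff ℝ 1 μ)
    (hμ' : ∀ t : ℝ, 0 ≤ t → deriv μ t ≤ 0)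
    (hbd : ∀ t s : ℝ, 0 ≤ s → s ≤ t →
      m * (t - s) ≤ μ (t ^ 2) * t - μ (s ^ 2) * s ∧
      μ (t ^ 2) * t - μ (s ^ 2) * s ≤ M * (t - s))
    (ξ : ℝ → ℝ) (hξ : ξ = fun t : ℝ => μ (t ^ 2) * t)
    (κ τ : Matrix (Fin d) (Fin d) ℝ) :
    sInf {y : ℝ | ∃ t ∈ Set.Ioo (0 : ℝ) 1,
        y = deriv ξ (frobNorm κ + t * (frobNorm τ - frobNorm κ))} *
      frobNorm (κ - τ) ^ 2 ≤
      frobIP (μ (frobNorm κ ^ 2) • κ - μ (frobNorm τ ^ 2) • τ) (κ - τ) ∧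
    m * frobNorm (κ - τ) ^ 2 ≤
      frobIP (μ (frobNorm κ ^ 2) • κ - μ (frobNorm τ ^ 2) • τ) (κ - τ) := by
  have hcase : frobIP κ τ = frobNorm κ * frobNorm τ ∨ (0 < frobNorm κ ∧ 0 < frobNorm τ) := by
    by_cases hκ0 : κ = 0
    · left; subst hκ0; simp [frobIP, frobNorm]
    by_cases hτ0 : τ = 0
    · left; subst hτ0; simp [frobIP, frobNorm]
    · exact Or.inr ⟨frobNorm_pos κ hκ0, frobNorm_pos τ hτ0⟩
  set a := frobNorm κ with ha_def
  set b := frobNorm τ with hb_def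
  have ha : 0 ≤ a := Real.sqrt_nonneg _
  have hb : 0 ≤ b := Real.sqrt_nonneg _
  set P := frobIP κ τ with hP_def
  have hNa : a ^ 2 = frobIP κ κ := frobNorm_sq κ
  have hNb : b ^ 2 = frobIP τ τ := frobNorm_sq τ
  have hP : P ≤ a * b := frobIP_cauchy κ τ
  have hI : frobIP (μ (a ^ 2) • κ - μ (b ^ 2) • τ) (κ - τ)
      = μ (a ^ 2) * a ^ 2 - (μ (a ^ 2) + μ (b ^ 2)) * P + μ (b ^ 2) * b ^ 2 := by
    rw [frobIP_expand, ← hNa, ← hNb]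
  have he : frobNorm (κ - τ) ^ 2 = a ^ 2 - 2 * P + b ^ 2 := by
    rw [frobNorm_sq, frobIP_sub_sub, ← hNa, ← hNb]
  set S := {y : ℝ | ∃ t ∈ Set.Ioo (0 : ℝ) 1, y = deriv ξ (a + t * (b - a))} with hS_def
  set c := sInf S with hc_def
  have hptnn : ∀ t : ℝ, t ∈ Set.Ioo (0:ℝ) 1 → 0 ≤ a + t * (b - a) := by
    intro t ht
    nlinarith [ht.1, ht.2, ha, hb]
  have hbdd : BddBelow S := by
    refine ⟨m, ?_⟩
    rintro y ⟨t, ht, rfl⟩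
    exact xi_deriv_ge μ m M ξ hC1 hξ hbd _ (hptnn t ht)
  have hμm : ∀ t : ℝ, 0 < t → m ≤ μ (t ^ 2) := by
    intro t ht
    have h1 := (hbd t 0 le_rfl ht.le).1
    have h2 : μ (0 ^ 2) * 0 = 0 := by ring
    rw [h2] at h1
    nlinarith
  have hderiv_le : ∀ t : ℝ, 0 ≤ t → deriv ξ t ≤ μ (t ^ 2) := by
    intro t ht
    rw [xi_deriv_eq μ ξ hC1 hξ]
    beta_reduce
    have h1 := hμ' (t ^ 2) (sq_nonneg t)
    nlinarith [mul_nonneg ht ht]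
  have hcont := xi_deriv_continuous μ ξ hC1 hξ
  have hcA : c ≤ deriv ξ a := by
    have hta : Filter.Tendsto (fun t : ℝ => deriv ξ (a + t * (b - a)))
        (nhdsWithin 0 (Set.Ioi 0)) (nhds (deriv ξ a)) := by
      have h1 : ContinuousAt (fun t : ℝ => deriv ξ (a + t * (b - a))) 0 :=
        (hcont.comp (continuous_const.add (continuous_mul_right (b - a)))).continuousAt
      have h2 := h1.tendsto
      simp only [add_zero, zero_mul] at h2
      exact h2.mono_left nhdsWithin_le_nhds
    refine ge_of_tendsto hta ?_
    filter_upwards [Ioo_mem_nhdsGT_of_mem (Set.left_mem_Ico.mpr one_pos)] with t htI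
    exact csInf_le hbdd ⟨t, htI, rfl⟩
  have hcB : c ≤ deriv ξ b := by
    have hta : Filter.Tendsto (fun t : ℝ => deriv ξ (a + t * (b - a)))
        (nhdsWithin 1 (Set.Iio 1)) (nhds (deriv ξ b)) := by
      have h1 : ContinuousAt (fun t : ℝ => deriv ξ (a + t * (b - a))) 1 :=
        (hcont.comp (continuous_const.add (continuous_mul_right (b - a)))).continuousAt
      have h2 := h1.tendsto
      have h3 : a + 1 * (b - a) = b := by ring
      rw [h3] at h2
      exact h2.mono_left nhdsWithin_le_nhds
    refine ge_of_tendsto hta ?_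
    filter_upwards [Ioo_mem_nhdsLT_of_mem (Set.right_mem_Ioc.mpr one_pos)] with t htI
    exact csInf_le hbdd ⟨t, htI, rfl⟩
  have hξd : ∀ x : ℝ, HasDerivAt ξ (deriv ξ x) x := fun x =>
    ((xi_hasDeriv μ ξ hC1 hξ x).differentiableAt).hasDerivAt
  have hξc : Continuous ξ := by
    rw [hξ]
    exact (hC1.continuous.comp (continuous_pow 2)).mul continuous_id
  -- mean value theorem step
  obtain ⟨D, hD3, hDc, hDm⟩ : ∃ D : ℝ, μ (a ^ 2) * a - μ (b ^ 2) * b = D * (a - b) ∧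
      c ≤ D ∧ m ≤ D := by
    rcases eq_or_ne a b with hab | hab
    · exact ⟨max c m, by rw [hab]; ring, le_max_left _ _, le_max_right _ _⟩
    rcases hab.lt_or_gt with hlt | hlt
    · obtain ⟨ζ, hζ, hDval⟩ := exists_hasDerivAt_eq_slope ξ (deriv ξ) hlt
        hξc.continuousOn (fun x _ => hξd x)
      have hba : (0:ℝ) < b - a := sub_pos.mpr hlt
      refine ⟨deriv ξ ζ, ?_, ?_, ?_⟩
      · have h1 : deriv ξ ζ * (b - a) = ξ b - ξ a := by
          rw [hDval]; field_simp
        have h2 : ξ a = μ (a ^ 2) * a := by rw [hξ]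
        have h3 : ξ b = μ (b ^ 2) * b := by rw [hξ]
        nlinarith [h1]
      · have hpt : a + (ζ - a) / (b - a) * (b - a) = ζ := by field_simp; ring
        refine csInf_le hbdd ⟨(ζ - a) / (b - a),
          ⟨div_pos (sub_pos.mpr hζ.1) hba, (div_lt_one hba).mpr (by linarith [hζ.2])⟩, ?_⟩
        rw [hpt]
      · exact xi_deriv_ge μ m M ξ hC1 hξ hbd ζ (le_trans ha hζ.1.le)
    · obtain ⟨ζ, hζ, hDval⟩ := exists_hasDerivAt_eq_slope ξ (deriv ξ) hlt
        hξc.continuousOn (fun x _ => hξd x)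
      have hba : b - a < 0 := sub_neg.mpr hlt
      refine ⟨deriv ξ ζ, ?_, ?_, ?_⟩
      · have h1 : deriv ξ ζ * (a - b) = ξ a - ξ b := by
          rw [hDval]; field_simp
        have h2 : ξ a = μ (a ^ 2) * a := by rw [hξ]
        have h3 : ξ b = μ (b ^ 2) * b := by rw [hξ]
        nlinarith [h1]
      · have hne : b - a ≠ 0 := ne_of_lt hba
        have hpt : a + (ζ - a) / (b - a) * (b - a) = ζ := by field_simp; ring
        refine csInf_le hbdd ⟨(ζ - a) / (b - a),
          ⟨div_pos_iff.mpr (Or.inr ⟨by linarith [hζ.2], hba⟩),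
           div_lt_one_iff.mpr (Or.inr (Or.inr ⟨hba, by linarith [hζ.1]⟩))⟩, ?_⟩
        rw [hpt]
      · exact xi_deriv_ge μ m M ξ hC1 hξ hbd ζ (le_trans hb hζ.1.le)
  constructor
  · rw [he, hI]
    refine key_ineq _ _ c D a b P hP ?_ hD3 hDc
    rcases hcase with h | ⟨ha0, hb0⟩
    · exact Or.inr h
    · left
      have h1 := hderiv_le a ha
      have h2 := hderiv_le b hb
      linarith
  · rw [he, hI]
    refine key_ineq _ _ m D a b P hP ?_ hD3 hDm
    rcases hcase with h | ⟨ha0, hb0⟩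
    · exact Or.inr h
    · left
      have h1 := hμm a ha0
      have h2 := hμm b hb0
      linarith
end

section
/- Let μ : [0,∞) → ℝ be continuously differentiable with μ' ≤ 0, satisfying m ≤ ξ'(t) ≤ M for all t ≥ 0 where ξ(t) := μ(t²)t and 0 < m ≤ M. Then for all κ, τ ∈ ℝ^{d×d}, |μ(|κ|²)κ − μ(|τ|²)τ|² ≤ 3M²|κ−τ|². -/
set_option maxHeartbeats 1000000

open scoped BigOperators

section aux

variable {E : Type*} [NormedAddCommGroup E] [InnerProductSpace ℝ E]

lemma key_half (μ : ℝ → ℝ) (m M : ℝ)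
    (hm : 0 < m) (hmM : m ≤ M)
    (hC1 : ContDiff ℝ 1 μ)
    (hμ' : ∀ t : ℝ, 0 ≤ t → deriv μ t ≤ 0)
    (hξ' : ∀ t : ℝ, 0 ≤ t →
      m ≤ deriv (fun s : ℝ => μ (s ^ 2) * s) t ∧
      deriv (fun s : ℝ => μ (s ^ 2) * s) t ≤ M)
    (x y : E) (hba : ‖y‖ ≤ ‖x‖) :
    ‖μ (‖x‖ ^ 2) • x - μ (‖y‖ ^ 2) • y‖ ^ 2 ≤ 3 * M ^ 2 * ‖x - y‖ ^ 2 := by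
  have hμd : Differentiable ℝ μ := hC1.differentiable one_ne_zero
  set ξ : ℝ → ℝ := fun s : ℝ => μ (s ^ 2) * s with hξdef
  have hξd : Differentiable ℝ ξ :=
    (hμd.comp (differentiable_pow 2)).mul differentiable_id
  have hIci : interior (Set.Ici (0:ℝ)) = Set.Ioi 0 := interior_Ici
  -- MVT bounds for ξ
  have hMVT_lo : ∀ u v : ℝ, 0 ≤ u → u ≤ v → m * (v - u) ≤ ξ v - ξ u := by
    intro u v hu huv
    refine (convex_Ici 0).mul_sub_le_image_sub_of_le_deriv hξd.continuous.continuousOn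
      hξd.differentiableOn (fun t ht => ?_) u hu v (hu.trans huv) huv
    exact (hξ' t (le_of_lt (by rwa [hIci] at ht))).1
  have hMVT_hi : ∀ u v : ℝ, 0 ≤ u → u ≤ v → ξ v - ξ u ≤ M * (v - u) := by
    intro u v hu huv
    refine (convex_Ici 0).image_sub_le_mul_sub_of_deriv_le hξd.continuous.continuousOn
      hξd.differentiableOn (fun t ht => ?_) u hu v (hu.trans huv) huv
    exact (hξ' t (le_of_lt (by rwa [hIci] at ht))).2
  have hξ0 : ξ 0 = 0 := by simp [hξdef]
  -- deriv ξ at 0 equals μ 0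
  have hderiv0 : deriv ξ 0 = μ 0 := by
    have h1 : HasDerivAt (fun s : ℝ => s ^ 2) (0 : ℝ) 0 := by
      simpa using (hasDerivAt_pow 2 (0:ℝ))
    have h2 : HasDerivAt (fun s : ℝ => μ (s ^ 2)) (deriv μ 0 * 0) 0 := by
      simpa [Function.comp_def] using ((hμd ((0:ℝ)^2)).hasDerivAt.comp 0 h1)
    have h3 : HasDerivAt ξ (deriv μ 0 * 0 * 0 + μ (0 ^ 2) * 1) 0 :=
      h2.mul (hasDerivAt_id 0)
    have := h3.deriv
    simpa using this
  -- bounds on μ (t^2)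
  have hμbound : ∀ t : ℝ, 0 ≤ t → m ≤ μ (t ^ 2) ∧ μ (t ^ 2) ≤ M := by
    intro t ht
    rcases eq_or_lt_of_le ht with h0 | h0
    · have := hξ' 0 le_rfl
      rw [hderiv0] at this
      simpa [← h0] using this
    · have hlo := hMVT_lo 0 t le_rfl ht
      have hhi := hMVT_hi 0 t le_rfl ht
      rw [hξ0] at hlo hhi
      have hξt : ξ t = μ (t ^ 2) * t := rfl
      constructor
      · nlinarith [hlo, hξt]
      · nlinarith [hhi, hξt]
  -- μ antitone on Ici 0
  have hanti : AntitoneOn μ (Set.Ici (0:ℝ)) := by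
    refine antitoneOn_of_deriv_nonpos (convex_Ici 0) hμd.continuous.continuousOn
      hμd.differentiableOn (fun t ht => ?_)
    exact hμ' t (le_of_lt (by rwa [hIci] at ht))
  set a := ‖x‖ with ha
  set b := ‖y‖ with hb
  have ha0 : 0 ≤ a := norm_nonneg x
  have hb0 : 0 ≤ b := norm_nonneg y
  set c := μ (a ^ 2) with hc
  set δ := μ (b ^ 2) - μ (a ^ 2) with hδ
  have hcm : m ≤ c := (hμbound a ha0).1
  have hcM : c ≤ M := (hμbound a ha0).2
  have hbm : m ≤ μ (b ^ 2) := (hμbound b hb0).1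
  have hbM : μ (b ^ 2) ≤ M := (hμbound b hb0).2
  have hδ0 : 0 ≤ δ := by
    have := hanti (Set.mem_Ici.2 (sq_nonneg b)) (Set.mem_Ici.2 (sq_nonneg a))
      (by nlinarith)
    simp [hδ]
    linarith [this]
  have hδM : δ ≤ M - m := by simp [hδ]; linarith
  -- δ * b ≤ (M - m) * (a - b)
  have hδb : δ * b ≤ (M - m) * (a - b) := by
    have h1 := hMVT_lo b a hb0 hba
    have hξa : ξ a = μ (a ^ 2) * a := rfl
    have hξb : ξ b = μ (b ^ 2) * b := rfl
    nlinarith [h1, hξa, hξb]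
  -- reverse triangle
  have hrev : a - b ≤ ‖x - y‖ := norm_sub_norm_le x y
  have hs0 : 0 ≤ ‖x - y‖ := norm_nonneg _
  -- algebraic identity
  have hid : μ (a ^ 2) • x - μ (b ^ 2) • y = c • (x - y) - δ • y := by
    have : μ (b ^ 2) = c + δ := by simp [hδ, hc]
    rw [this, smul_sub, add_smul]
    abel
  have hinner : inner ℝ (x - y) y = (a ^ 2 - b ^ 2 - ‖x - y‖ ^ 2) / 2 := by
    have h1 : ‖x - y‖ ^ 2 = a ^ 2 - 2 * inner ℝ x y + b ^ 2 := by
      rw [norm_sub_sq_real]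
    have h2 : (inner ℝ (x - y) y : ℝ) = inner ℝ x y - b ^ 2 := by
      rw [inner_sub_left, real_inner_self_eq_norm_sq]
    linarith
  have hexp : ‖c • (x - y) - δ • y‖ ^ 2 =
      c ^ 2 * ‖x - y‖ ^ 2 - 2 * (c * δ) * inner ℝ (x - y) y + δ ^ 2 * b ^ 2 := by
    rw [norm_sub_sq_real, real_inner_smul_left, real_inner_smul_right,
      norm_smul, norm_smul]
    rw [Real.norm_eq_abs, Real.norm_eq_abs, abs_of_nonneg (by linarith : (0:ℝ) ≤ c),
      abs_of_nonneg hδ0]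
    ring
  rw [hid, hexp, hinner]
  set s := ‖x - y‖ with hsdef
  clear_value a b c δ s
  have hs2 : 0 ≤ s ^ 2 := sq_nonneg s
  have hab2 : (a - b) ^ 2 ≤ s ^ 2 := by nlinarith [hrev, hba, hs0]
  have hM0 : (0:ℝ) ≤ M := le_trans hm.le hmM
  have hc2 : c ^ 2 ≤ M ^ 2 := by nlinarith [hcm, hcM, hm.le]
  have hcδ : c * δ ≤ M ^ 2 := by nlinarith [mul_le_mul hcM hδM hδ0 hM0, hm.le, hmM]
  have e1 : c ^ 2 * s ^ 2 ≤ M ^ 2 * s ^ 2 := mul_le_mul_of_nonneg_right hc2 hs2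
  have e2 : c * δ * s ^ 2 ≤ M ^ 2 * s ^ 2 := mul_le_mul_of_nonneg_right hcδ hs2
  have e3 : 0 ≤ c * δ * (a ^ 2 - b ^ 2) := by
    apply mul_nonneg (mul_nonneg (by linarith) hδ0)
    nlinarith
  have e4 : δ ^ 2 * b ^ 2 ≤ M ^ 2 * s ^ 2 := by
    have h1 : (δ * b) ^ 2 ≤ ((M - m) * (a - b)) ^ 2 := by
      have := mul_nonneg hδ0 hb0
      nlinarith
    have hMm2 : (M - m) ^ 2 ≤ M ^ 2 := by nlinarith [hm.le, hmM]
    have h2 : ((M - m) * (a - b)) ^ 2 ≤ M ^ 2 * s ^ 2 := by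
      have t1 : (M - m) ^ 2 * (a - b) ^ 2 ≤ M ^ 2 * (a - b) ^ 2 :=
        mul_le_mul_of_nonneg_right hMm2 (sq_nonneg _)
      have t2 : M ^ 2 * (a - b) ^ 2 ≤ M ^ 2 * s ^ 2 :=
        mul_le_mul_of_nonneg_left hab2 (sq_nonneg M)
      nlinarith [t1, t2]
    nlinarith [h1, h2]
  nlinarith [e1, e2, e3, e4]

lemma key_full (μ : ℝ → ℝ) (m M : ℝ)
    (hm : 0 < m) (hmM : m ≤ M)
    (hC1 : ContDiff ℝ 1 μ)
    (hμ' : ∀ t : ℝ, 0 ≤ t → deriv μ t ≤ 0)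
    (hξ' : ∀ t : ℝ, 0 ≤ t →
      m ≤ deriv (fun s : ℝ => μ (s ^ 2) * s) t ∧
      deriv (fun s : ℝ => μ (s ^ 2) * s) t ≤ M)
    (x y : E) :
    ‖μ (‖x‖ ^ 2) • x - μ (‖y‖ ^ 2) • y‖ ^ 2 ≤ 3 * M ^ 2 * ‖x - y‖ ^ 2 := by
  rcases le_total ‖y‖ ‖x‖ with h | h
  · exact key_half μ m M hm hmM hC1 hμ' hξ' x y h
  · have := key_half μ m M hm hmM hC1 hμ' hξ' y x h
    rwa [norm_sub_rev (μ (‖y‖ ^ 2) • y), norm_sub_rev y x] at this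

end aux

theorem lipschitz_pointwise {d : ℕ} (μ : ℝ → ℝ) (m M : ℝ)
    (hm : 0 < m) (hmM : m ≤ M)
    (hC1 : ContDiff ℝ 1 μ)
    (hμ' : ∀ t : ℝ, 0 ≤ t → deriv μ t ≤ 0)
    (hξ' : ∀ t : ℝ, 0 ≤ t →
      m ≤ deriv (fun s : ℝ => μ (s ^ 2) * s) t ∧
      deriv (fun s : ℝ => μ (s ^ 2) * s) t ≤ M)
    (κ τ : Matrix (Fin d) (Fin d) ℝ) :
    frobNorm (μ (frobNorm κ ^ 2) • κ - μ (frobNorm τ ^ 2) • τ) ^ 2 ≤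
      3 * M ^ 2 * frobNorm (κ - τ) ^ 2 := by
  let e : Matrix (Fin d) (Fin d) ℝ → EuclideanSpace ℝ (Fin d × Fin d) :=
    fun A => WithLp.toLp 2 (fun p : Fin d × Fin d => A p.1 p.2)
  have hIP : ∀ A B : Matrix (Fin d) (Fin d) ℝ, frobIP A B = inner ℝ (e A) (e B) := by
    intro A B
    simp [frobIP, PiLp.inner_apply, RCLike.inner_apply, Fintype.sum_prod_type, e, mul_comm]
  have hN : ∀ A : Matrix (Fin d) (Fin d) ℝ, frobNorm A = ‖e A‖ := by
    intro A
    rw [frobNorm, hIP, real_inner_self_eq_norm_sq, Real.sqrt_sq (norm_nonneg _)]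
  have he : e (μ (frobNorm κ ^ 2) • κ - μ (frobNorm τ ^ 2) • τ) =
      μ (‖e κ‖ ^ 2) • e κ - μ (‖e τ‖ ^ 2) • e τ := by
    rw [hN κ, hN τ]; rfl
  have he2 : e (κ - τ) = e κ - e τ := rfl
  rw [hN (μ (frobNorm κ ^ 2) • κ - μ (frobNorm τ ^ 2) • τ), hN (κ - τ), he, he2]
  exact key_full μ m M hm hmM hC1 hμ' hξ' (e κ) (e τ)
end

section
/- Let E : V → ℝ be defined by E(u) = ∫_Ω φ(|e(u)|²)dx − ℓ(u) with μ satisfying (A1)–(A3) with constants 0 < m ≤ M, and let u* be the unique minimiser of E on V. Then for all v ∈ V: (m/2)‖u* − v‖_V² ≤ E(v) − E(u*) ≤ (√3 M/2)‖u* − v‖_V². -/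
open MeasureTheory
open scoped BigOperators

lemma frobNorm_eq {d : ℕ} (A : Matrix (Fin d) (Fin d) ℝ) :
    frobNorm A = ‖((WithLp.equiv 2 ((Fin d × Fin d) → ℝ)).symm (fun p => A p.1 p.2) :
      EuclideanSpace ℝ (Fin d × Fin d))‖ := by
  rw [EuclideanSpace.norm_eq]
  simp [frobNorm, frobIP, Fintype.sum_prod_type, Real.norm_eq_abs, sq_abs, sq]

lemma frobNorm_nonneg {d : ℕ} (A : Matrix (Fin d) (Fin d) ℝ) : 0 ≤ frobNorm A :=
  Real.sqrt_nonneg _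

lemma frobNorm_combo {d : ℕ} (A B : Matrix (Fin d) (Fin d) ℝ) (a b : ℝ) (ha : 0 ≤ a) (hb : 0 ≤ b) :
    frobNorm (a • A + b • B) ≤ a * frobNorm A + b * frobNorm B := by
  rw [frobNorm_eq, frobNorm_eq, frobNorm_eq]
  have h : ((WithLp.equiv 2 ((Fin d × Fin d) → ℝ)).symm (fun p => (a • A + b • B) p.1 p.2) :
      EuclideanSpace ℝ (Fin d × Fin d))
      = a • (WithLp.equiv 2 _).symm (fun p => A p.1 p.2)
        + b • (WithLp.equiv 2 _).symm (fun p => B p.1 p.2) := by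
    ext p
    simp [Matrix.add_apply, Matrix.smul_apply]
  rw [h]
  calc ‖a • ((WithLp.equiv 2 ((Fin d × Fin d) → ℝ)).symm (fun p => A p.1 p.2) : EuclideanSpace ℝ _)
        + b • ((WithLp.equiv 2 ((Fin d × Fin d) → ℝ)).symm (fun p => B p.1 p.2) : EuclideanSpace ℝ _)‖
      ≤ ‖a • ((WithLp.equiv 2 ((Fin d × Fin d) → ℝ)).symm (fun p => A p.1 p.2) : EuclideanSpace ℝ _)‖
        + ‖b • ((WithLp.equiv 2 ((Fin d × Fin d) → ℝ)).symm (fun p => B p.1 p.2) : EuclideanSpace ℝ _)‖ :=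
        norm_add_le _ _
    _ = _ := by
        rw [norm_smul, norm_smul, Real.norm_eq_abs, Real.norm_eq_abs,
          abs_of_nonneg ha, abs_of_nonneg hb]

/-- pointwise convexity of `A ↦ P (frobNorm A)` for `P` convex monotone on `[0,∞)`. -/
lemma combo_le {d : ℕ} (P : ℝ → ℝ) (hconv : ConvexOn ℝ (Set.Ici 0) P)
    (hmono : MonotoneOn P (Set.Ici 0)) (A B : Matrix (Fin d) (Fin d) ℝ)
    (a b : ℝ) (ha : 0 ≤ a) (hb : 0 ≤ b) (hab : a + b = 1) :
    P (frobNorm (a • A + b • B)) ≤ a * P (frobNorm A) + b * P (frobNorm B) := by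
  have h1 := frobNorm_combo A B a b ha hb
  have hmem : a * frobNorm A + b * frobNorm B ∈ Set.Ici (0:ℝ) := by
    have := frobNorm_nonneg A; have := frobNorm_nonneg B
    simp only [Set.mem_Ici]; positivity
  have h2 : P (frobNorm (a • A + b • B)) ≤ P (a * frobNorm A + b * frobNorm B) :=
    hmono (Set.mem_Ici.2 (frobNorm_nonneg _)) hmem h1
  refine h2.trans ?_
  have := hconv.2 (Set.mem_Ici.2 (frobNorm_nonneg A)) (Set.mem_Ici.2 (frobNorm_nonneg B)) ha hb hab
  simpa [smul_eq_mul] using this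

set_option maxHeartbeats 1000000 in
theorem energy_norm_equivalence {d : ℕ} {Ω : Type*} [MeasureSpace Ω]
    {V : Type*} [NormedAddCommGroup V] [InnerProductSpace ℝ V]
    (e : V →ₗ[ℝ] (Ω → Matrix (Fin d) (Fin d) ℝ))
    (ℓ : V →L[ℝ] ℝ)
    (μ : ℝ → ℝ) (m M : ℝ) (hm : 0 < m) (hmM : m ≤ M)
    (hC1 : ContDiff ℝ 1 μ)
    (hμ' : ∀ t : ℝ, 0 ≤ t → deriv μ t ≤ 0)
    (hbd : ∀ t s : ℝ, 0 ≤ s → s ≤ t →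
      m * (t - s) ≤ μ (t ^ 2) * t - μ (s ^ 2) * s ∧
      μ (t ^ 2) * t - μ (s ^ 2) * s ≤ M * (t - s))
    (hnorm : ∀ v : V, ‖v‖ ^ 2 = ∫ x, frobNorm (e v x) ^ 2)
    (hintN : ∀ v : V, Integrable (fun x => frobNorm (e v x) ^ 2))
    (φ : ℝ → ℝ) (hφ : φ = fun s : ℝ => (1 / 2) * ∫ t in (0 : ℝ)..s, μ t)
    (E : V → ℝ)
    (hE : E = fun u : V => (∫ x, φ (frobNorm (e u x) ^ 2)) - ℓ u)
    (hintφ : ∀ u : V, Integrable (fun x => φ (frobNorm (e u x) ^ 2)))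
    (ustar : V) (hmin : ∀ v : V, E ustar ≤ E v)
    (huniq : ∀ v : V, E v = E ustar → v = ustar) :
    ∀ v : V,
      (m / 2) * ‖ustar - v‖ ^ 2 ≤ E v - E ustar ∧
      E v - E ustar ≤ (Real.sqrt 3 * M / 2) * ‖ustar - v‖ ^ 2 := by
  intro v
  have hM0 : 0 < M := lt_of_lt_of_le hm hmM
  set c : ℝ := Real.sqrt 3 * M / 2 with hc
  have hsqrt3 : (1:ℝ) ≤ Real.sqrt 3 := by
    have : Real.sqrt 1 ≤ Real.sqrt 3 := Real.sqrt_le_sqrt (by norm_num)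
    simpa using this
  have hc_half : M / 2 ≤ c := by
    rw [hc]; nlinarith
  have hc0 : 0 < c := by rw [hc]; nlinarith
  -- derivative of t ↦ φ (t^2)
  have hφd : ∀ t : ℝ, HasDerivAt (fun t : ℝ => φ (t ^ 2)) (μ (t ^ 2) * t) t := by
    intro t
    have hμc : Continuous μ := hC1.continuous
    have h1 : HasDerivAt (fun s : ℝ => ∫ r in (0:ℝ)..s, μ r) (μ (t ^ 2)) (t ^ 2) :=
      intervalIntegral.integral_hasDerivAt_right (hμc.intervalIntegrable _ _)
        (hμc.stronglyMeasurable.stronglyMeasurableAtFilter) hμc.continuousAt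
    have h2 : HasDerivAt (fun t : ℝ => t ^ 2) (2 * t) t := by
      simpa using (hasDerivAt_pow 2 t)
    have h3 := HasDerivAt.comp (h := fun t : ℝ => t ^ 2)
      (h₂ := fun s : ℝ => ∫ r in (0:ℝ)..s, μ r) (x := t) h1 h2
    have h4 := h3.const_mul (1/2 : ℝ)
    rw [hφ]
    simp only [Function.comp] at h4
    refine h4.congr_deriv ?_
    ring
  -- the two scalar functions
  set p : ℝ → ℝ := fun t => φ (t ^ 2) - m / 2 * t ^ 2 with hp
  set q : ℝ → ℝ := fun t => c * t ^ 2 - φ (t ^ 2) with hq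
  have hpd : ∀ t : ℝ, HasDerivAt p (μ (t ^ 2) * t - m * t) t := by
    intro t
    have h2 : HasDerivAt (fun t : ℝ => m / 2 * t ^ 2) (m * t) t := by
      have := (hasDerivAt_pow 2 t).const_mul (m/2)
      exact this.congr_deriv (by ring)
    exact (hφd t).sub h2
  have hqd : ∀ t : ℝ, HasDerivAt q (2 * c * t - μ (t ^ 2) * t) t := by
    intro t
    have h2 : HasDerivAt (fun t : ℝ => c * t ^ 2) (2 * c * t) t := by
      have := (hasDerivAt_pow 2 t).const_mul c
      exact this.congr_deriv (by ring)
    exact h2.sub (hφd t)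
  have hpderiv : ∀ t : ℝ, deriv p t = μ (t ^ 2) * t - m * t := fun t => (hpd t).deriv
  have hqderiv : ∀ t : ℝ, deriv q t = 2 * c * t - μ (t ^ 2) * t := fun t => (hqd t).deriv
  have hpcont : ContinuousOn p (Set.Ici 0) :=
    fun t _ => ((hpd t).continuousAt).continuousWithinAt
  have hqcont : ContinuousOn q (Set.Ici 0) :=
    fun t _ => ((hqd t).continuousAt).continuousWithinAt
  have hpdiff : DifferentiableOn ℝ p (interior (Set.Ici (0:ℝ))) :=
    fun t _ => ((hpd t).differentiableAt).differentiableWithinAt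
  have hqdiff : DifferentiableOn ℝ q (interior (Set.Ici (0:ℝ))) :=
    fun t _ => ((hqd t).differentiableAt).differentiableWithinAt
  have hzero : μ (0 ^ 2) * 0 = 0 := by ring
  -- convexity and monotonicity of p
  have hpconv : ConvexOn ℝ (Set.Ici 0) p := by
    apply MonotoneOn.convexOn_of_deriv (convex_Ici 0) hpcont hpdiff
    intro x hx y hy hxy
    rw [interior_Ici] at hx hy
    rw [hpderiv, hpderiv]
    have := (hbd y x (le_of_lt hx) hxy).1
    linarith
  have hpmono : MonotoneOn p (Set.Ici 0) := by
    apply monotoneOn_of_deriv_nonneg (convex_Ici 0) hpcont hpdiff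
    intro x hx
    rw [interior_Ici] at hx
    rw [hpderiv]
    have := (hbd x 0 le_rfl (le_of_lt hx)).1
    rw [hzero] at this
    linarith
  -- convexity and monotonicity of q
  have hqconv : ConvexOn ℝ (Set.Ici 0) q := by
    apply MonotoneOn.convexOn_of_deriv (convex_Ici 0) hqcont hqdiff
    intro x hx y hy hxy
    rw [interior_Ici] at hx hy
    rw [hqderiv, hqderiv]
    have := (hbd y x (le_of_lt hx) hxy).2
    have h2c : M ≤ 2 * c := by linarith
    have hxy' : M * (y - x) ≤ 2 * c * (y - x) :=
      mul_le_mul_of_nonneg_right h2c (by linarith)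
    linarith
  have hqmono : MonotoneOn q (Set.Ici 0) := by
    apply monotoneOn_of_deriv_nonneg (convex_Ici 0) hqcont hqdiff
    intro x hx
    rw [interior_Ici] at hx
    rw [hqderiv]
    have := (hbd x 0 le_rfl (le_of_lt hx)).2
    rw [hzero] at this
    have h2c : M ≤ 2 * c := by linarith
    have hx' : M * x ≤ 2 * c * x := mul_le_mul_of_nonneg_right h2c (le_of_lt hx)
    linarith
  -- integrability
  have int_p : ∀ u : V, Integrable (fun x => p (frobNorm (e u x))) := by
    intro u
    have := (hintφ u).sub ((hintN u).const_mul (m/2))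
    exact this
  have int_q : ∀ u : V, Integrable (fun x => q (frobNorm (e u x))) := by
    intro u
    have := ((hintN u).const_mul c).sub (hintφ u)
    exact this
  -- convexity of the integral functionals
  have conv_int : ∀ (P : ℝ → ℝ), (∀ u : V, Integrable fun x => P (frobNorm (e u x))) →
      ConvexOn ℝ (Set.Ici 0) P → MonotoneOn P (Set.Ici 0) →
      ∀ (u₁ u₂ : V) (a b : ℝ), 0 ≤ a → 0 ≤ b → a + b = 1 →
      (∫ x, P (frobNorm (e (a • u₁ + b • u₂) x))) ≤
        a * (∫ x, P (frobNorm (e u₁ x))) + b * (∫ x, P (frobNorm (e u₂ x))) := by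
    intro P hint hconv hmono u₁ u₂ a b ha hb hab
    have key : ∀ x, P (frobNorm (e (a • u₁ + b • u₂) x)) ≤
        a * P (frobNorm (e u₁ x)) + b * P (frobNorm (e u₂ x)) := by
      intro x
      have he : e (a • u₁ + b • u₂) x = a • (e u₁ x) + b • (e u₂ x) := by
        simp [map_add, _root_.map_smul, Pi.add_apply, Pi.smul_apply]
      rw [he]
      exact combo_le P hconv hmono _ _ a b ha hb hab
    calc (∫ x, P (frobNorm (e (a • u₁ + b • u₂) x)))
        ≤ ∫ x, (a * P (frobNorm (e u₁ x)) + b * P (frobNorm (e u₂ x))) :=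
          integral_mono (hint _) (((hint u₁).const_mul a).add ((hint u₂).const_mul b)) key
      _ = a * (∫ x, P (frobNorm (e u₁ x))) + b * (∫ x, P (frobNorm (e u₂ x))) := by
          rw [integral_add ((hint u₁).const_mul a) ((hint u₂).const_mul b),
            integral_const_mul, integral_const_mul]
  -- set up the segment
  set w : V := v - ustar with hw
  set K : ℝ := inner ℝ ustar w with hK
  set W : ℝ := ‖w‖ ^ 2 with hWdef
  have hW0 : 0 ≤ W := by rw [hWdef]; positivity
  have hv1 : ustar + (1:ℝ) • w = v := by rw [one_smul, hw]; abel
  have hv0 : ustar + (0:ℝ) • w = ustar := by rw [zero_smul, add_zero]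
  have hns : ∀ t : ℝ, ‖ustar + t • w‖ ^ 2 = ‖ustar‖ ^ 2 + 2 * t * K + t ^ 2 * W := by
    intro t
    rw [norm_add_sq_real, real_inner_smul_right, norm_smul, mul_pow, Real.norm_eq_abs, sq_abs]
    ring
  have hnormv : ‖ustar - v‖ ^ 2 = W := by
    rw [norm_sub_rev, hWdef, hw]
  -- splitting the energy
  have hsplit_p : ∀ u : V, (∫ x, φ (frobNorm (e u x) ^ 2)) =
      (∫ x, p (frobNorm (e u x))) + m / 2 * ‖u‖ ^ 2 := by
    intro u
    have heq : (fun x => φ (frobNorm (e u x) ^ 2)) =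
        fun x => p (frobNorm (e u x)) + m / 2 * (frobNorm (e u x) ^ 2) := by
      funext x; rw [hp]; ring
    rw [heq, integral_add (int_p u) ((hintN u).const_mul _), integral_const_mul, ← hnorm u]
  have hsplit_q : ∀ u : V, (∫ x, φ (frobNorm (e u x) ^ 2)) =
      c * ‖u‖ ^ 2 - (∫ x, q (frobNorm (e u x))) := by
    intro u
    have heq : (fun x => q (frobNorm (e u x))) =
        fun x => c * (frobNorm (e u x) ^ 2) - φ (frobNorm (e u x) ^ 2) := by
      funext x; rw [hq]
    rw [heq, integral_sub ((hintN u).const_mul c) (hintφ u), integral_const_mul, ← hnorm u]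
    ring
  -- linear part
  have hℓ : ∀ t : ℝ, ℓ (ustar + t • w) = ℓ ustar + t * ℓ w := by
    intro t; rw [map_add, ℓ.map_smul, smul_eq_mul]
  set Pp : ℝ → ℝ := fun t => ∫ x, p (frobNorm (e (ustar + t • w) x)) with hPp
  set Pq : ℝ → ℝ := fun t => ∫ x, q (frobNorm (e (ustar + t • w) x)) with hPq
  have hEp : ∀ t : ℝ, E (ustar + t • w) =
      Pp t + m / 2 * (‖ustar‖ ^ 2 + 2 * t * K + t ^ 2 * W) - (ℓ ustar + t * ℓ w) := by
    intro t
    rw [hE]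
    simp only []
    rw [hsplit_p (ustar + t • w), hns t, hℓ t]
  have hEq : ∀ t : ℝ, E (ustar + t • w) =
      c * (‖ustar‖ ^ 2 + 2 * t * K + t ^ 2 * W) - Pq t - (ℓ ustar + t * ℓ w) := by
    intro t
    rw [hE]
    simp only []
    rw [hsplit_q (ustar + t • w), hns t, hℓ t]
    try ring
  have hmin' : ∀ t : ℝ, E (ustar + (0:ℝ) • w) ≤ E (ustar + t • w) := by
    intro t; rw [hv0]; exact hmin _
  -- LOWER BOUND
  have hconvPp : ∀ t : ℝ, 0 ≤ t → t ≤ 1 → Pp t ≤ (1 - t) * Pp 0 + t * Pp 1 := by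
    intro t ht0 ht1
    have hcombo : (1 - t) • (ustar + (0:ℝ) • w) + t • (ustar + (1:ℝ) • w)
        = ustar + t • w := by module
    have := conv_int p int_p hpconv hpmono (ustar + (0:ℝ) • w) (ustar + (1:ℝ) • w)
      (1 - t) t (by linarith) ht0 (by ring)
    rw [hcombo] at this
    exact this
  set A1 : ℝ := Pp 1 - Pp 0 + m * K - ℓ w with hA1
  have keyLow : ∀ t : ℝ, 0 < t → t ≤ 1 → 0 ≤ A1 + m / 2 * t * W := by
    intro t ht0 ht1
    have h1 := hmin' t
    rw [hEp t, hEp 0] at h1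
    have h2 := hconvPp t (le_of_lt ht0) ht1
    by_contra hcon
    push_neg at hcon
    rw [hA1] at hcon
    nlinarith [mul_pos ht0 (neg_pos.2 hcon)]
  have hA1nonneg : 0 ≤ A1 := by
    by_contra hcon
    push_neg at hcon
    set D : ℝ := m / 2 * W + 1 with hD
    have hD0 : 0 < D := by rw [hD]; nlinarith
    set t : ℝ := min 1 ((-A1) / D) with ht
    have ht0 : 0 < t := by
      rw [ht]
      apply lt_min one_pos
      apply div_pos (by linarith) hD0
    have ht1 : t ≤ 1 := min_le_left _ _
    have htD : t * D ≤ -A1 := by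
      have h := min_le_right 1 ((-A1) / D)
      calc t * D ≤ ((-A1) / D) * D := by
            apply mul_le_mul_of_nonneg_right h (le_of_lt hD0)
        _ = -A1 := by field_simp
    have hkey := keyLow t ht0 ht1
    rw [hD] at htD
    rw [hA1] at hkey hcon
    nlinarith
  have lower : m / 2 * ‖ustar - v‖ ^ 2 ≤ E v - E ustar := by
    rw [hnormv]
    have h1 := hEp 1
    have h0 := hEp 0
    rw [hv1] at h1
    rw [hv0] at h0
    rw [h1, h0]
    have := hA1nonneg
    rw [hA1] at this
    linarith
  -- UPPER BOUND
  have hconvPq : ∀ t : ℝ, -1 ≤ t → t < 0 →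
      Pq 0 ≤ (1 / (1 - t)) * Pq t + ((-t) / (1 - t)) * Pq 1 := by
    intro t htm ht0
    have h1t : (0:ℝ) < 1 - t := by linarith
    have hcombo : (1 / (1 - t)) • (ustar + t • w) + ((-t) / (1 - t)) • (ustar + (1:ℝ) • w)
        = ustar + (0:ℝ) • w := by
      have h1 : (1:ℝ) - t ≠ 0 := ne_of_gt h1t
      match_scalars <;> (try field_simp) <;> ring
    have := conv_int q int_q hqconv hqmono (ustar + t • w) (ustar + (1:ℝ) • w)
      (1 / (1 - t)) ((-t) / (1 - t))
      (by positivity) (by apply div_nonneg; linarith; linarith)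
      (by field_simp; ring)
    rw [hcombo] at this
    exact this
  set A2 : ℝ := Pq 1 - Pq 0 with hA2
  have keyUp : ∀ t : ℝ, -1 ≤ t → t < 0 → 2 * c * K - ℓ w - A2 ≤ c * (-t) * W := by
    intro t htm ht0
    have h1 := hmin' t
    rw [hEq t, hEq 0] at h1
    have h2 := hconvPq t htm ht0
    have h1t : (0:ℝ) < 1 - t := by linarith
    -- from h2: Pq t - Pq 0 ≥ t * A2
    have h3 : t * A2 ≤ Pq t - Pq 0 := by
      have h4 := mul_le_mul_of_nonneg_left h2 (le_of_lt h1t)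
      have h5 : (1 - t) * ((1 / (1 - t)) * Pq t + ((-t) / (1 - t)) * Pq 1)
          = Pq t - t * Pq 1 := by
        field_simp
        ring
      rw [h5] at h4
      rw [hA2]
      nlinarith
    by_contra hcon
    push_neg at hcon
    rw [hA2] at hcon h3
    nlinarith [mul_pos (neg_pos.2 ht0) (sub_pos.2 hcon)]
  have hA2key : 2 * c * K - ℓ w - A2 ≤ 0 := by
    by_contra hcon
    push_neg at hcon
    set D : ℝ := c * W + 1 with hD
    have hD0 : 0 < D := by rw [hD]; nlinarith
    set δ : ℝ := 2 * c * K - ℓ w - A2 with hδ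
    set s : ℝ := min 1 (δ / D) with hs
    have hs0 : 0 < s := by
      rw [hs]
      exact lt_min one_pos (div_pos hcon hD0)
    have hs1 : s ≤ 1 := min_le_left _ _
    have hsD : s * D ≤ δ := by
      have h := min_le_right 1 (δ / D)
      calc s * D ≤ (δ / D) * D := mul_le_mul_of_nonneg_right h (le_of_lt hD0)
        _ = δ := by field_simp
    have hkey := keyUp (-s) (by linarith) (by linarith)
    rw [neg_neg] at hkey
    rw [hD] at hsD
    rw [hδ] at hsD hcon hkey
    rw [hA2] at hkey hsD hcon
    nlinarith
  have upper : E v - E ustar ≤ c * ‖ustar - v‖ ^ 2 := by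
    rw [hnormv]
    have h1 := hEq 1
    have h0 := hEq 0
    rw [hv1] at h1
    rw [hv0] at h0
    rw [h1, h0]
    have := hA2key
    rw [hA2] at this
    linarith
  exact ⟨lower, upper⟩
end

section
/- For the Carreau law μ(t) = μ∞ + (μ₀ − μ∞)(1 + λt)^{(r−2)/2} with r ∈ (1,2), λ > 0, 0 < μ∞ < μ₀, the inequality [μ∞ + (μ₀−μ∞)(1+λt²)^{−1+(r−2)/2}(1 + λ(r−1)t²)] / [μ∞ + (μ₀−μ∞)(1+λt²)^{(r−2)/2}] ≥ (1 + λ(r−1)t²)/(1 + λt²) holds for all t ≥ 0. -/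
theorem carreau_quotient_inequality (r lam mu0 muInf : ℝ)
    (hr1 : 1 < r) (hr2 : r < 2) (hlam : 0 < lam)
    (hInf : 0 < muInf) (hlt : muInf < mu0) :
    ∀ t : ℝ, 0 ≤ t →
      (1 + lam * (r - 1) * t ^ 2) / (1 + lam * t ^ 2) ≤
        (muInf + (mu0 - muInf) * (1 + lam * t ^ 2) ^ (-1 + (r - 2) / 2) *
            (1 + lam * (r - 1) * t ^ 2)) /
          (muInf + (mu0 - muInf) * (1 + lam * t ^ 2) ^ ((r - 2) / 2)) := by
  intro t ht
  have ht2 : 0 ≤ t ^ 2 := sq_nonneg t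
  set s : ℝ := 1 + lam * t ^ 2 with hs_def
  have hs : 0 < s := by positivity
  have hb : 0 < mu0 - muInf := by linarith
  have hpow : 0 < s ^ ((r - 2) / 2) := Real.rpow_pos_of_pos hs _
  have hden : 0 < muInf + (mu0 - muInf) * s ^ ((r - 2) / 2) := by positivity
  rw [div_le_div_iff₀ hs hden]
  have hsplit : s ^ (-1 + (r - 2) / 2) = s⁻¹ * s ^ ((r - 2) / 2) := by
    rw [Real.rpow_add hs, Real.rpow_neg_one]
  rw [hsplit]
  have hc : 1 + lam * (r - 1) * t ^ 2 ≤ s := by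
    rw [hs_def]
    nlinarith [mul_nonneg hlam.le ht2]
  have hkey : s⁻¹ * s = 1 := inv_mul_cancel₀ hs.ne'
  have expand : (muInf + (mu0 - muInf) * (s⁻¹ * s ^ ((r - 2) / 2)) *
      (1 + lam * (r - 1) * t ^ 2)) * s =
      muInf * s + (mu0 - muInf) * s ^ ((r - 2) / 2) *
      (1 + lam * (r - 1) * t ^ 2) := by
    field_simp
  rw [expand]
  nlinarith [mul_le_mul_of_nonneg_left hc hInf.le]
end

section
/- Let 0 < ε₋ < ε₊ < ∞ and r ∈ (1,2). Define the relaxed power-law viscosity μ_ε(t) := ε₋^{r−2} for 0 ≤ t < ε₋², μ_ε(t) := t^{(r−2)/2} for ε₋² ≤ t ≤ ε₊², and μ_ε(t) := ε₊^{r−2} for t > ε₊². Then μ_ε is decreasing, satisfies (r−1)ε₊^{r−2}(t−s) ≤ μ_ε(t²)t − μ_ε(s²)s ≤ ε₋^{r−2}(t−s) for all t ≥ s ≥ 0, and (r−1)ε₊^{r−2} ≤ μ_ε(t) ≤ ε₋^{r−2} for all t ≥ 0. -/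
noncomputable def relaxedPowerLaw (r em ep : ℝ) (t : ℝ) : ℝ :=
  if t < em ^ 2 then em ^ (r - 2)
  else if t ≤ ep ^ 2 then t ^ ((r - 2) / 2)
  else ep ^ (r - 2)

theorem relaxed_power_law_properties (r em ep : ℝ)
    (hr1 : 1 < r) (hr2 : r < 2) (h0 : 0 < em) (hlt : em < ep) :
    AntitoneOn (relaxedPowerLaw r em ep) (Set.Ici (0 : ℝ)) ∧
    (∀ t s : ℝ, 0 ≤ s → s ≤ t →
      (r - 1) * ep ^ (r - 2) * (t - s) ≤
        relaxedPowerLaw r em ep (t ^ 2) * t - relaxedPowerLaw r em ep (s ^ 2) * s ∧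
      relaxedPowerLaw r em ep (t ^ 2) * t - relaxedPowerLaw r em ep (s ^ 2) * s ≤
        em ^ (r - 2) * (t - s)) ∧
    (∀ t : ℝ, 0 ≤ t →
      (r - 1) * ep ^ (r - 2) ≤ relaxedPowerLaw r em ep t ∧
      relaxedPowerLaw r em ep t ≤ em ^ (r - 2)) := by
  have hep : 0 < ep := h0.trans hlt
  have hre : r - 2 ≤ 0 := by linarith
  -- (a²)^((r-2)/2) = a^(r-2) for a > 0
  have hsq : ∀ a : ℝ, 0 < a → (a ^ 2) ^ ((r - 2) / 2) = a ^ (r - 2) := by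
    intro a ha
    rw [← Real.rpow_natCast a 2, ← Real.rpow_mul ha.le,
      show ((2:ℕ):ℝ) * ((r - 2) / 2) = r - 2 by push_cast; ring]
  have hemep : ep ^ (r - 2) ≤ em ^ (r - 2) :=
    Real.rpow_le_rpow_of_nonpos h0 hlt.le hre
  have hemsq : (0:ℝ) < em ^ 2 := by positivity
  have hsqlt : em ^ 2 < ep ^ 2 := by nlinarith
  have heppos : (0:ℝ) < ep ^ (r - 2) := Real.rpow_pos_of_pos hep _
  have hempos : (0:ℝ) < em ^ (r - 2) := Real.rpow_pos_of_pos h0 _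
  -- bounds for μ
  have hmu : ∀ t : ℝ, 0 ≤ t →
      ep ^ (r - 2) ≤ relaxedPowerLaw r em ep t ∧ relaxedPowerLaw r em ep t ≤ em ^ (r - 2) := by
    intro t ht
    unfold relaxedPowerLaw
    split_ifs with h1 h2
    · exact ⟨hemep, le_refl _⟩
    · push_neg at h1
      have htp : 0 < t := lt_of_lt_of_le hemsq h1
      constructor
      · calc ep ^ (r - 2) = (ep ^ 2) ^ ((r - 2) / 2) := (hsq ep hep).symm
          _ ≤ t ^ ((r - 2) / 2) := Real.rpow_le_rpow_of_nonpos htp h2 (by linarith)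
      · calc t ^ ((r - 2) / 2) ≤ (em ^ 2) ^ ((r - 2) / 2) :=
            Real.rpow_le_rpow_of_nonpos hemsq h1 (by linarith)
          _ = em ^ (r - 2) := hsq em h0
    · exact ⟨le_refl _, hemep⟩
  -- antitonicity
  have hanti : AntitoneOn (relaxedPowerLaw r em ep) (Set.Ici (0 : ℝ)) := by
    intro s hs t ht hst
    simp only [Set.mem_Ici] at hs ht
    by_cases h1 : s < em ^ 2
    · have h := (hmu t ht).2
      unfold relaxedPowerLaw at h ⊢
      rw [if_pos h1]
      exact h
    · by_cases h2 : t ≤ ep ^ 2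
      · push_neg at h1
        have hsp : 0 < s := lt_of_lt_of_le hemsq h1
        unfold relaxedPowerLaw
        rw [if_neg (not_lt.mpr h1), if_pos (hst.trans h2),
          if_neg (not_lt.mpr (h1.trans hst)), if_pos h2]
        exact Real.rpow_le_rpow_of_nonpos hsp hst (by linarith)
      · have h := (hmu s hs).1
        push_neg at h1 h2
        unfold relaxedPowerLaw at h ⊢
        rw [if_neg (not_lt.mpr h1)] at h ⊢
        rw [if_neg (not_lt.mpr (h1.trans hst)), if_neg (not_le.mpr h2)]
        split_ifs at h ⊢ with h3
        · exact h
        · exact le_refl _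
  refine ⟨hanti, ?_, fun t ht => ⟨le_trans (by nlinarith) (hmu t ht).1, (hmu t ht).2⟩⟩
  -- ξ(t) = μ(t²)·t explicit formulas
  set ξ : ℝ → ℝ := fun t => relaxedPowerLaw r em ep (t ^ 2) * t with hξ
  have hA : ∀ t : ℝ, 0 ≤ t → t ≤ em → ξ t = em ^ (r - 2) * t := by
    intro t ht htem
    show relaxedPowerLaw r em ep (t ^ 2) * t = _
    unfold relaxedPowerLaw
    rcases lt_or_eq_of_le htem with h | h
    · rw [if_pos (by nlinarith)]
    · rw [h, if_neg (lt_irrefl _), if_pos hsqlt.le, hsq em h0]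
  have hB : ∀ t : ℝ, em ≤ t → t ≤ ep → ξ t = t ^ (r - 1) := by
    intro t h1 h2
    have htp : 0 < t := lt_of_lt_of_le h0 h1
    show relaxedPowerLaw r em ep (t ^ 2) * t = _
    unfold relaxedPowerLaw
    rw [if_neg (not_lt.mpr (by nlinarith)), if_pos (by nlinarith), hsq t htp]
    nth_rewrite 2 [← Real.rpow_one t]
    rw [← Real.rpow_add htp, show r - 2 + 1 = r - 1 by ring]
  have hC : ∀ t : ℝ, ep ≤ t → ξ t = ep ^ (r - 2) * t := by
    intro t h1
    have htp : 0 < t := lt_of_lt_of_le hep h1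
    show relaxedPowerLaw r em ep (t ^ 2) * t = _
    unfold relaxedPowerLaw
    rcases lt_or_eq_of_le h1 with h | h
    · rw [if_neg (not_lt.mpr (by nlinarith)), if_neg (not_le.mpr (by nlinarith))]
    · rw [← h, if_neg (not_lt.mpr hsqlt.le), if_pos (le_refl _), hsq ep hep]
  -- the two-sided bound as a predicate
  set P : ℝ → ℝ → Prop := fun s t =>
    (r - 1) * ep ^ (r - 2) * (t - s) ≤ ξ t - ξ s ∧ ξ t - ξ s ≤ em ^ (r - 2) * (t - s) with hP
  have hchain : ∀ a b c : ℝ, P a b → P b c → P a c := by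
    intro a b c ⟨h1, h2⟩ ⟨h3, h4⟩
    have e1 : (r - 1) * ep ^ (r - 2) * (c - a)
        = (r - 1) * ep ^ (r - 2) * (c - b) + (r - 1) * ep ^ (r - 2) * (b - a) := by ring
    have e2 : em ^ (r - 2) * (c - a) = em ^ (r - 2) * (c - b) + em ^ (r - 2) * (b - a) := by ring
    exact ⟨by linarith, by linarith⟩
  have hcm : (r - 1) * ep ^ (r - 2) ≤ em ^ (r - 2) := by nlinarith
  have hPA : ∀ s t : ℝ, 0 ≤ s → s ≤ t → t ≤ em → P s t := by
    intro s t hs hst htem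
    rw [hP]
    dsimp only
    rw [hA s hs (hst.trans htem), hA t (hs.trans hst) htem,
      show em ^ (r - 2) * t - em ^ (r - 2) * s = em ^ (r - 2) * (t - s) by ring]
    exact ⟨mul_le_mul_of_nonneg_right hcm (sub_nonneg.mpr hst), le_refl _⟩
  have hPC : ∀ s t : ℝ, ep ≤ s → s ≤ t → P s t := by
    intro s t hs hst
    rw [hP]
    dsimp only
    rw [hC s hs, hC t (hs.trans hst),
      show ep ^ (r - 2) * t - ep ^ (r - 2) * s = ep ^ (r - 2) * (t - s) by ring]
    exact ⟨mul_le_mul_of_nonneg_right (by nlinarith) (sub_nonneg.mpr hst),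
      mul_le_mul_of_nonneg_right hemep (sub_nonneg.mpr hst)⟩
  have hPB : ∀ s t : ℝ, em ≤ s → s ≤ t → t ≤ ep → P s t := by
    intro s t hs hst htep
    rw [hP]
    dsimp only
    rcases eq_or_lt_of_le hst with rfl | hlt'
    · exact ⟨by simp, by simp⟩
    have hsp : 0 < s := lt_of_lt_of_le h0 hs
    have hcont : ContinuousOn (fun x : ℝ => x ^ (r - 1)) (Set.Icc s t) := by
      intro x hx
      exact (Real.hasDerivAt_rpow_const
        (Or.inl (ne_of_gt (lt_of_lt_of_le hsp hx.1)))).continuousAt.continuousWithinAt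
    have hderiv : ∀ x ∈ Set.Ioo s t,
        HasDerivAt (fun x : ℝ => x ^ (r - 1)) ((r - 1) * x ^ (r - 1 - 1)) x := fun x hx =>
      Real.hasDerivAt_rpow_const (Or.inl (ne_of_gt (hsp.trans hx.1)))
    obtain ⟨c, hc, hceq⟩ := exists_hasDerivAt_eq_slope _ _ hlt' hcont hderiv
    have hcp : 0 < c := hsp.trans hc.1
    have e : r - 1 - 1 = r - 2 := by ring
    rw [e] at hceq
    have hts : (0:ℝ) < t - s := by linarith
    have hv : t ^ (r - 1) - s ^ (r - 1) = (r - 1) * c ^ (r - 2) * (t - s) := by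
      rw [hceq, div_mul_cancel₀ _ (ne_of_gt hts)]
    rw [hB s hs (hst.trans htep), hB t (hs.trans hst) htep, hv]
    have hclo : ep ^ (r - 2) ≤ c ^ (r - 2) :=
      Real.rpow_le_rpow_of_nonpos hcp (by linarith [hc.2]) hre
    have hchi : c ^ (r - 2) ≤ em ^ (r - 2) :=
      Real.rpow_le_rpow_of_nonpos h0 (by linarith [hc.1]) hre
    refine ⟨mul_le_mul_of_nonneg_right
      (mul_le_mul_of_nonneg_left hclo (by linarith)) hts.le, ?_⟩
    exact mul_le_mul_of_nonneg_right
      (by nlinarith [Real.rpow_pos_of_pos hcp (r - 2)]) hts.le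
  -- assemble
  intro t s hs hst
  show P s t
  rcases le_total t em with h1 | h1
  · exact hPA s t hs hst h1
  rcases le_total s em with h2 | h2
  · rcases le_total t ep with h3 | h3
    · exact hchain _ _ _ (hPA s em hs h2 (le_refl _)) (hPB em t (le_refl _) h1 h3)
    · exact hchain _ _ _ (hPA s em hs h2 (le_refl _))
        (hchain _ _ _ (hPB em ep (le_refl _) hlt.le (le_refl _)) (hPC ep t (le_refl _) h3))
  rcases le_total t ep with h3 | h3
  · exact hPB s t h2 hst h3
  rcases le_total s ep with h4 | h4
  · exact hchain _ _ _ (hPB s ep h2 h4 (le_refl _)) (hPC ep t (le_refl _) h3)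
  · exact hPC s t h4 hst
end

section
/- Let r ∈ (1,2), 0 < ε₋ < ε₊, and μ_ε the relaxed power-law viscosity. For all t ≥ 0 the quotient μ_ε(t²)/(2μ_ε'(t²)t² + μ_ε(t²)) equals 1 when t < ε₋ or t > ε₊, and equals 1/(r−1) when ε₋ < t < ε₊; in particular the resulting contraction factor satisfies q_A := 1 − (1/4)·(sup over this quotient)⁻¹ ≤ 1 − (r−1)/4, a bound independent of ε₋ and ε₊. -/
/-- The pointwise quotient appearing in the computable contraction factor. -/
noncomputable def quotPL (r em ep : ℝ) (t : ℝ) : ℝ :=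
  relaxedPowerLaw r em ep (t ^ 2) /
    (2 * deriv (relaxedPowerLaw r em ep) (t ^ 2) * t ^ 2 + relaxedPowerLaw r em ep (t ^ 2))

open Set Filter

lemma rpl_eq_left {r em ep s : ℝ} (h : s < em ^ 2) :
    relaxedPowerLaw r em ep s = em ^ (r - 2) := if_pos h

lemma rpl_eq_mid {r em ep s : ℝ} (h1 : ¬ s < em ^ 2) (h2 : s ≤ ep ^ 2) :
    relaxedPowerLaw r em ep s = s ^ ((r - 2) / 2) := by
  unfold relaxedPowerLaw; rw [if_neg h1, if_pos h2]

lemma rpl_eq_right {r em ep s : ℝ} (h1 : ¬ s < em ^ 2) (h2 : ¬ s ≤ ep ^ 2) :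
    relaxedPowerLaw r em ep s = ep ^ (r - 2) := by
  unfold relaxedPowerLaw; rw [if_neg h1, if_neg h2]

lemma sq_rpow_half {a : ℝ} (ha : 0 < a) (q : ℝ) :
    ((a ^ 2 : ℝ)) ^ (q / 2) = a ^ q := by
  rw [← Real.rpow_natCast a 2, ← Real.rpow_mul ha.le]
  norm_num
  rw [show (2:ℝ) * (q / 2) = q from by ring]

lemma rpl_deriv_left {r em ep s : ℝ} (h : s < em ^ 2) :
    deriv (relaxedPowerLaw r em ep) s = 0 := by
  have hev : relaxedPowerLaw r em ep =ᶠ[nhds s] fun _ => em ^ (r - 2) := by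
    filter_upwards [Iio_mem_nhds h] with x hx
    exact rpl_eq_left hx
  rw [hev.deriv_eq, deriv_const]

lemma rpl_deriv_right {r em ep s : ℝ} (h0 : 0 < em) (hlt : em < ep) (h : ep ^ 2 < s) :
    deriv (relaxedPowerLaw r em ep) s = 0 := by
  have hsq : em ^ 2 ≤ ep ^ 2 := by nlinarith
  have hev : relaxedPowerLaw r em ep =ᶠ[nhds s] fun _ => ep ^ (r - 2) := by
    filter_upwards [Ioi_mem_nhds h] with x hx
    exact rpl_eq_right (not_lt.2 (hsq.trans (le_of_lt hx))) (not_le.2 hx)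
  rw [hev.deriv_eq, deriv_const]

lemma rpl_deriv_mid {r em ep s : ℝ} (h0 : 0 < em) (h1 : em ^ 2 < s) (h2 : s < ep ^ 2) :
    deriv (relaxedPowerLaw r em ep) s = (r - 2) / 2 * s ^ ((r - 2) / 2 - 1) := by
  have hs : 0 < s := lt_trans (pow_pos h0 2) h1
  have hev : relaxedPowerLaw r em ep =ᶠ[nhds s] fun x => x ^ ((r - 2) / 2) := by
    filter_upwards [Ioo_mem_nhds h1 h2] with x hx
    exact rpl_eq_mid (not_lt.2 hx.1.le) hx.2.le
  rw [hev.deriv_eq]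
  exact (Real.hasDerivAt_rpow_const (Or.inl hs.ne')).deriv

lemma rpl_deriv_em {r em ep : ℝ} (hr2 : r < 2) (h0 : 0 < em) (hlt : em < ep) :
    deriv (relaxedPowerLaw r em ep) (em ^ 2) = 0 := by
  have hsq : em ^ 2 < ep ^ 2 := by
    apply pow_lt_pow_left₀ hlt h0.le; norm_num
  have hpos : (0 : ℝ) < em ^ 2 := pow_pos h0 2
  have hval : relaxedPowerLaw r em ep (em ^ 2) = (em ^ 2 : ℝ) ^ ((r - 2) / 2) :=
    rpl_eq_mid (lt_irrefl _) hsq.le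
  apply deriv_zero_of_not_differentiableAt
  intro hdiff
  have hd := hdiff.hasDerivAt
  set d := deriv (relaxedPowerLaw r em ep) (em ^ 2) with hdd
  -- left: constant
  have hL : HasDerivWithinAt (fun _ : ℝ => em ^ (r - 2)) d (Iio (em ^ 2)) (em ^ 2) := by
    refine (hd.hasDerivWithinAt).congr_of_eventuallyEq ?_ ?_
    · filter_upwards [self_mem_nhdsWithin] with x hx
      exact (rpl_eq_left hx).symm
    · rw [hval, sq_rpow_half h0]
  have hzero : d = 0 := by
    have e1 := hL.derivWithin (uniqueDiffWithinAt_Iio _)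
    have e2 := (hasDerivWithinAt_const (em ^ 2) (Iio (em ^ 2)) (em ^ (r - 2))).derivWithin
      (uniqueDiffWithinAt_Iio (em ^ 2))
    exact e1.symm.trans e2
  -- right: rpow
  have hR : HasDerivWithinAt (fun x : ℝ => x ^ ((r - 2) / 2)) d (Ioi (em ^ 2)) (em ^ 2) := by
    refine (hd.hasDerivWithinAt).congr_of_eventuallyEq ?_ ?_
    · filter_upwards [self_mem_nhdsWithin, nhdsWithin_le_nhds (Iio_mem_nhds hsq)] with x hx1 hx2
      exact (rpl_eq_mid (not_lt.2 (le_of_lt hx1)) hx2.le).symm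
    · exact hval.symm
  have hval2 : d = (r - 2) / 2 * (em ^ 2 : ℝ) ^ ((r - 2) / 2 - 1) := by
    have hrp := (Real.hasDerivAt_rpow_const (p := (r - 2) / 2)
      (Or.inl hpos.ne')).hasDerivWithinAt (s := Ioi (em ^ 2))
    have e1 := hR.derivWithin (uniqueDiffWithinAt_Ioi _)
    have e2 := hrp.derivWithin (uniqueDiffWithinAt_Ioi (em ^ 2))
    exact e1.symm.trans e2
  rw [hzero] at hval2
  have hp : (0 : ℝ) < (em ^ 2 : ℝ) ^ ((r - 2) / 2 - 1) := Real.rpow_pos_of_pos hpos _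
  nlinarith

lemma rpl_deriv_ep {r em ep : ℝ} (hr2 : r < 2) (h0 : 0 < em) (hlt : em < ep) :
    deriv (relaxedPowerLaw r em ep) (ep ^ 2) = 0 := by
  have hsq : em ^ 2 < ep ^ 2 := by
    apply pow_lt_pow_left₀ hlt h0.le; norm_num
  have hep : (0 : ℝ) < ep := h0.trans hlt
  have hpos : (0 : ℝ) < ep ^ 2 := pow_pos hep 2
  have hval : relaxedPowerLaw r em ep (ep ^ 2) = (ep ^ 2 : ℝ) ^ ((r - 2) / 2) :=
    rpl_eq_mid (not_lt.2 hsq.le) le_rfl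
  apply deriv_zero_of_not_differentiableAt
  intro hdiff
  have hd := hdiff.hasDerivAt
  set d := deriv (relaxedPowerLaw r em ep) (ep ^ 2) with hdd
  -- right: constant
  have hR : HasDerivWithinAt (fun _ : ℝ => ep ^ (r - 2)) d (Ioi (ep ^ 2)) (ep ^ 2) := by
    refine (hd.hasDerivWithinAt).congr_of_eventuallyEq ?_ ?_
    · filter_upwards [self_mem_nhdsWithin] with x hx
      exact (rpl_eq_right (not_lt.2 (hsq.le.trans (le_of_lt hx))) (not_le.2 hx)).symm
    · rw [hval, sq_rpow_half hep]
  have hzero : d = 0 := by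
    have e1 := hR.derivWithin (uniqueDiffWithinAt_Ioi _)
    have e2 := (hasDerivWithinAt_const (ep ^ 2) (Ioi (ep ^ 2)) (ep ^ (r - 2))).derivWithin
      (uniqueDiffWithinAt_Ioi (ep ^ 2))
    exact e1.symm.trans e2
  -- left: rpow
  have hL : HasDerivWithinAt (fun x : ℝ => x ^ ((r - 2) / 2)) d (Iio (ep ^ 2)) (ep ^ 2) := by
    refine (hd.hasDerivWithinAt).congr_of_eventuallyEq ?_ ?_
    · filter_upwards [nhdsWithin_le_nhds (Ioi_mem_nhds hsq), self_mem_nhdsWithin] with x hx1 hx2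
      exact (rpl_eq_mid (not_lt.2 hx1.le) hx2.le).symm
    · exact hval.symm
  have hval2 : d = (r - 2) / 2 * (ep ^ 2 : ℝ) ^ ((r - 2) / 2 - 1) := by
    have hrp := (Real.hasDerivAt_rpow_const (p := (r - 2) / 2)
      (Or.inl hpos.ne')).hasDerivWithinAt (s := Iio (ep ^ 2))
    have e1 := hL.derivWithin (uniqueDiffWithinAt_Iio _)
    have e2 := hrp.derivWithin (uniqueDiffWithinAt_Iio (ep ^ 2))
    exact e1.symm.trans e2
  rw [hzero] at hval2
  have hp : (0 : ℝ) < (ep ^ 2 : ℝ) ^ ((r - 2) / 2 - 1) := Real.rpow_pos_of_pos hpos _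
  nlinarith

lemma quot_one_of {r em ep t : ℝ} (hderiv : deriv (relaxedPowerLaw r em ep) (t ^ 2) = 0)
    (hpos : 0 < relaxedPowerLaw r em ep (t ^ 2)) : quotPL r em ep t = 1 := by
  rw [quotPL, hderiv]
  simp [hpos.ne']

lemma quot_mid {r em ep t : ℝ} (hr1 : 1 < r) (h0 : 0 < em) (ht : 0 ≤ t)
    (hmt : em < t) (htp : t < ep) : quotPL r em ep t = 1 / (r - 1) := by
  have h1 : em ^ 2 < t ^ 2 := by apply pow_lt_pow_left₀ hmt h0.le; norm_num
  have h2 : t ^ 2 < ep ^ 2 := by apply pow_lt_pow_left₀ htp ht; norm_num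
  have hs : (0 : ℝ) < t ^ 2 := lt_trans (pow_pos h0 2) h1
  set p := (r - 2) / 2 with hp
  have hsp : (0 : ℝ) < (t ^ 2 : ℝ) ^ p := Real.rpow_pos_of_pos hs _
  have hkey : (t ^ 2 : ℝ) ^ (p - 1) * t ^ 2 = (t ^ 2 : ℝ) ^ p := by
    rw [← Real.rpow_add_one hs.ne' (p - 1), sub_add_cancel]
  rw [quotPL, rpl_eq_mid (not_lt.2 h1.le) h2.le, rpl_deriv_mid h0 h1 h2]
  rw [show 2 * ((r - 2) / 2 * (t ^ 2 : ℝ) ^ ((r - 2) / 2 - 1)) * t ^ 2 +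
      (t ^ 2 : ℝ) ^ ((r - 2) / 2) = (r - 1) * (t ^ 2 : ℝ) ^ p from by
    rw [show 2 * ((r - 2) / 2 * (t ^ 2 : ℝ) ^ ((r - 2) / 2 - 1)) * t ^ 2 =
        (r - 2) * ((t ^ 2 : ℝ) ^ (p - 1) * t ^ 2) from by rw [hp]; ring, hkey]
    rw [hp]; ring]
  rw [mul_comm, ← div_div, div_self hsp.ne']

theorem relaxed_power_law_contraction_factor (r em ep : ℝ)
    (hr1 : 1 < r) (hr2 : r < 2) (h0 : 0 < em) (hlt : em < ep) :
    (∀ t : ℝ, 0 ≤ t →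
      ((t < em ∨ ep < t) → quotPL r em ep t = 1) ∧
      (em < t → t < ep → quotPL r em ep t = 1 / (r - 1))) ∧
    1 - (1 / 4) * (sSup {y : ℝ | ∃ t : ℝ, 0 ≤ t ∧ y = quotPL r em ep t})⁻¹ ≤
      1 - (r - 1) / 4 := by
  have hep : (0 : ℝ) < ep := h0.trans hlt
  have hone : ∀ t : ℝ, 0 ≤ t → (t < em ∨ ep < t) → quotPL r em ep t = 1 := by
    intro t ht h
    rcases h with h | h
    · have h1 : t ^ 2 < em ^ 2 := by apply pow_lt_pow_left₀ h ht; norm_num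
      exact quot_one_of (rpl_deriv_left h1)
        (by rw [rpl_eq_left h1]; exact Real.rpow_pos_of_pos h0 _)
    · have h1 : ep ^ 2 < t ^ 2 := by apply pow_lt_pow_left₀ h hep.le; norm_num
      exact quot_one_of (rpl_deriv_right h0 hlt h1)
        (by
          rw [rpl_eq_right (not_lt.2 ((pow_lt_pow_left₀ hlt h0.le (by norm_num)).le.trans h1.le))
            (not_le.2 h1)]
          exact Real.rpow_pos_of_pos hep _)
  have hcases : ∀ t : ℝ, 0 ≤ t →
      quotPL r em ep t = 1 ∨ quotPL r em ep t = 1 / (r - 1) := by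
    intro t ht
    rcases lt_trichotomy t em with h | h | h
    · exact Or.inl (hone t ht (Or.inl h))
    · left
      subst h
      exact quot_one_of (rpl_deriv_em hr2 h0 hlt)
        (by
          rw [rpl_eq_mid (lt_irrefl _) (pow_lt_pow_left₀ hlt h0.le (by norm_num)).le]
          exact Real.rpow_pos_of_pos (pow_pos h0 2) _)
    rcases lt_trichotomy t ep with h' | h' | h'
    · exact Or.inr (quot_mid hr1 h0 ht h h')
    · left
      subst h'
      exact quot_one_of (rpl_deriv_ep hr2 h0 hlt)
        (by
          rw [rpl_eq_mid (not_lt.2 (pow_lt_pow_left₀ hlt h0.le (by norm_num)).le) le_rfl]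
          exact Real.rpow_pos_of_pos (pow_pos hep 2) _)
    · exact Or.inl (hone t ht (Or.inr h'))
  constructor
  · intro t ht
    exact ⟨hone t ht, fun h1 h2 => quot_mid hr1 h0 ht h1 h2⟩
  · set A := {y : ℝ | ∃ t : ℝ, 0 ≤ t ∧ y = quotPL r em ep t} with hA
    have hr1' : (0 : ℝ) < r - 1 := by linarith
    have hle1 : (1 : ℝ) ≤ 1 / (r - 1) := by
      rw [le_div_iff₀ hr1']; linarith
    have hmem : 1 / (r - 1) ∈ A := by
      refine ⟨(em + ep) / 2, by linarith, ?_⟩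
      exact (quot_mid hr1 h0 (by linarith) (by linarith) (by linarith)).symm
    have hub : ∀ y ∈ A, y ≤ 1 / (r - 1) := by
      rintro y ⟨t, ht, rfl⟩
      rcases hcases t ht with h | h
      · rw [h]; exact hle1
      · rw [h]
    have hsup : sSup A = 1 / (r - 1) :=
      le_antisymm (csSup_le ⟨_, hmem⟩ hub) (le_csSup ⟨1 / (r - 1), hub⟩ hmem)
    rw [hsup]
    simp only [one_div, inv_inv]
    linarith
end
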